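/- arXiv:2206.07475 — 7 statements merged into one kernel-verified Lean document; each statement's English description precedes it below -/
import Mathlib

section
/- Let X be a real Hilbert space and let j : X → ℝ be Gâteaux differentiable with derivative j' : X → X* that is L-Lipschitz for some L > 0, and assume j is γ-strongly convex for some γ > 0. Let ξ̄ ∈ X be the unique global minimizer of j. Then for every nonempty subset M ⊆ X, every δ > 0, and every ξ̄_δ ∈ M satisfying j(ξ̄_δ) ≤ inf_{ξ ∈ M} j(ξ) + δ/2, the following quasi-optimal error estimate holds: ‖ξ̄ − ξ̄_δ‖_X ≤ ( (L/γ) · inf_{η ∈ M} ‖ξ̄ − η‖²_X + δ/γ )^{1/2}. -/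
open Topology Filter

section Aux

variable {X : Type*} [NormedAddCommGroup X] [InnerProductSpace ℝ X] [CompleteSpace X]
variable (j : X → ℝ) (j' : X → (X →L[ℝ] ℝ))

set_option linter.unusedSectionVars false

lemma line_hasDerivAt
    (hGateaux : ∀ ξ η : X,
      Tendsto (fun t : ℝ => (j (ξ + t • η) - j ξ) / t) (𝓝[≠] (0 : ℝ)) (𝓝 (j' ξ η)))
    (ξ v : X) (t : ℝ) :
    HasDerivAt (fun s : ℝ => j (ξ + s • v)) (j' (ξ + t • v) v) t := by
  rw [hasDerivAt_iff_tendsto_slope_zero]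
  have h := hGateaux (ξ + t • v) v
  refine h.congr' ?_
  filter_upwards [self_mem_nhdsWithin] with s hs
  have : ξ + t • v + s • v = ξ + (t + s) • v := by
    rw [add_smul]; abel
  rw [this]
  simp [smul_eq_mul, div_eq_inv_mul]

lemma taylor_bounds
    (L γ : ℝ) (hL : 0 < L)
    (hGateaux : ∀ ξ η : X,
      Tendsto (fun t : ℝ => (j (ξ + t • η) - j ξ) / t) (𝓝[≠] (0 : ℝ)) (𝓝 (j' ξ η)))
    (hLip : ∀ ξ η : X, ‖j' ξ - j' η‖ ≤ L * ‖ξ - η‖)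
    (hConv : ∀ ξ η : X, γ * ‖ξ - η‖ ^ 2 ≤ (j' ξ - j' η) (ξ - η))
    (ξ v : X) :
    j' ξ v + γ / 2 * ‖v‖ ^ 2 ≤ j (ξ + v) - j ξ ∧
      j (ξ + v) - j ξ ≤ j' ξ v + L / 2 * ‖v‖ ^ 2 := by
  set g : ℝ → ℝ := fun s => j (ξ + s • v) with hg
  set g' : ℝ → ℝ := fun s => j' (ξ + s • v) v with hg'
  have hd : ∀ t : ℝ, HasDerivAt g (g' t) t := fun t =>
    line_hasDerivAt j j' hGateaux ξ v t
  have hdiff : ∀ s t : ℝ, g' s - g' t = (j' (ξ + s • v) - j' (ξ + t • v)) v := by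
    intro s t; simp [hg', ContinuousLinearMap.sub_apply]
  have hsub : ∀ s t : ℝ, ξ + s • v - (ξ + t • v) = (s - t) • v := by
    intro s t; rw [sub_smul]; abel
  have habs : ∀ s t : ℝ, |g' s - g' t| ≤ L * ‖v‖ ^ 2 * |s - t| := by
    intro s t
    have h1 : |g' s - g' t| ≤ ‖j' (ξ + s • v) - j' (ξ + t • v)‖ * ‖v‖ := by
      rw [hdiff s t, ← Real.norm_eq_abs]
      exact (j' (ξ + s • v) - j' (ξ + t • v)).le_opNorm v
    have h2 : ‖j' (ξ + s • v) - j' (ξ + t • v)‖ ≤ L * (|s - t| * ‖v‖) := by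
      have := hLip (ξ + s • v) (ξ + t • v)
      rwa [hsub s t, norm_smul, Real.norm_eq_abs] at this
    calc |g' s - g' t| ≤ ‖j' (ξ + s • v) - j' (ξ + t • v)‖ * ‖v‖ := h1
      _ ≤ L * (|s - t| * ‖v‖) * ‖v‖ := mul_le_mul_of_nonneg_right h2 (norm_nonneg v)
      _ = L * ‖v‖ ^ 2 * |s - t| := by ring
  have hgcont : Continuous g' := by
    have : LipschitzWith (Real.toNNReal (L * ‖v‖ ^ 2)) g' := by
      apply LipschitzWith.of_dist_le_mul
      intro s t
      rw [Real.dist_eq, Real.dist_eq, Real.coe_toNNReal _ (by positivity)]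
      exact habs s t
    exact this.continuous
  have hFTC : ∫ t in (0:ℝ)..1, g' t = g 1 - g 0 :=
    intervalIntegral.integral_eq_sub_of_hasDerivAt (fun t _ => hd t)
      (hgcont.intervalIntegrable 0 1)
  have hconv' : ∀ t : ℝ, γ * t ^ 2 * ‖v‖ ^ 2 ≤ t * (g' t - g' 0) := by
    intro t
    have h := hConv (ξ + t • v) (ξ + (0:ℝ) • v)
    rw [hsub t 0, sub_zero, norm_smul, Real.norm_eq_abs] at h
    have h' : (j' (ξ + t • v) - j' (ξ + (0:ℝ) • v)) (t • v) =
        t * (g' t - g' 0) := by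
      rw [map_smul, smul_eq_mul, ← hdiff t 0]
    rw [h'] at h
    have heq : γ * t ^ 2 * ‖v‖ ^ 2 = γ * (|t| * ‖v‖) ^ 2 := by
      rw [mul_pow, sq_abs]; ring
    rw [heq]; exact h
  have hlow : ∀ t ∈ Set.Icc (0:ℝ) 1, g' 0 + γ * ‖v‖ ^ 2 * t ≤ g' t := by
    intro t ht
    rcases eq_or_lt_of_le ht.1 with h0 | h0
    · simp [← h0]
    · have := hconv' t
      nlinarith
  have hupp : ∀ t ∈ Set.Icc (0:ℝ) 1, g' t ≤ g' 0 + L * ‖v‖ ^ 2 * t := by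
    intro t ht
    have h := (le_abs_self (g' t - g' 0)).trans (habs t 0)
    rw [sub_zero, abs_of_nonneg ht.1] at h
    linarith
  have hci : ∀ c : ℝ, (∫ t in (0:ℝ)..1, (g' 0 + c * t)) = g' 0 + c / 2 := by
    intro c
    rw [intervalIntegral.integral_add intervalIntegrable_const
      (Continuous.intervalIntegrable (by fun_prop : Continuous fun t : ℝ => c * t) 0 1),
      intervalIntegral.integral_const_mul]
    simp [integral_id]
    ring
  have hmono1 : (∫ t in (0:ℝ)..1, (g' 0 + γ * ‖v‖ ^ 2 * t)) ≤ ∫ t in (0:ℝ)..1, g' t :=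
    intervalIntegral.integral_mono_on (by norm_num)
      (Continuous.intervalIntegrable (by fun_prop) 0 1)
      (hgcont.intervalIntegrable 0 1) hlow
  have hmono2 : (∫ t in (0:ℝ)..1, g' t) ≤ ∫ t in (0:ℝ)..1, (g' 0 + L * ‖v‖ ^ 2 * t) :=
    intervalIntegral.integral_mono_on (by norm_num)
      (hgcont.intervalIntegrable 0 1)
      (Continuous.intervalIntegrable (by fun_prop) 0 1) hupp
  have hg1 : g 1 = j (ξ + v) := by simp [hg]
  have hg0 : g 0 = j ξ := by simp [hg]
  have hg'0 : g' 0 = j' ξ v := by simp [hg']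
  rw [hci (γ * ‖v‖ ^ 2)] at hmono1
  rw [hci (L * ‖v‖ ^ 2)] at hmono2
  rw [hFTC, hg1, hg0] at hmono1 hmono2
  rw [hg'0] at hmono1 hmono2
  constructor <;> linarith

lemma deriv_at_min_eq_zero
    (hGateaux : ∀ ξ η : X,
      Tendsto (fun t : ℝ => (j (ξ + t • η) - j ξ) / t) (𝓝[≠] (0 : ℝ)) (𝓝 (j' ξ η)))
    (ξbar : X) (hmin : ∀ ξ : X, j ξbar ≤ j ξ) (η : X) : j' ξbar η = 0 := by
  have h := hGateaux ξbar η
  have hsub1 : Set.Ioi (0:ℝ) ⊆ {(0:ℝ)}ᶜ := fun x hx => ne_of_gt hx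
  have hsub2 : Set.Iio (0:ℝ) ⊆ {(0:ℝ)}ᶜ := fun x hx => ne_of_lt hx
  have hpos : 0 ≤ j' ξbar η := by
    have h' := h.mono_left (nhdsWithin_mono 0 hsub1)
    refine ge_of_tendsto h' ?_
    filter_upwards [self_mem_nhdsWithin] with t ht
    exact div_nonneg (by linarith [hmin (ξbar + t • η)]) (le_of_lt ht)
  have hneg : j' ξbar η ≤ 0 := by
    have h' := h.mono_left (nhdsWithin_mono 0 hsub2)
    refine le_of_tendsto h' ?_
    filter_upwards [self_mem_nhdsWithin] with t ht
    exact div_nonpos_of_nonneg_of_nonpos (by linarith [hmin (ξbar + t • η)]) (le_of_lt ht)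
  linarith

end Aux

/-- Quasi-optimal error estimate for quasi-minimizers: with `ξ̄`
the unique global minimizer of `j`, any `ξδ ∈ M` with
`j ξδ ≤ inf_M j + δ/2` satisfies
`‖ξ̄ − ξδ‖ ≤ ((L/γ)·inf_{η ∈ M} ‖ξ̄ − η‖² + δ/γ)^{1/2}`. -/
theorem quasiOptimal_error_estimate
    {X : Type*} [NormedAddCommGroup X] [InnerProductSpace ℝ X] [CompleteSpace X]
    (j : X → ℝ) (j' : X → (X →L[ℝ] ℝ)) (L γ : ℝ) (hL : 0 < L) (hγ : 0 < γ)
    (hGateaux : ∀ ξ η : X,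
      Tendsto (fun t : ℝ => (j (ξ + t • η) - j ξ) / t) (𝓝[≠] (0 : ℝ)) (𝓝 (j' ξ η)))
    (hLip : ∀ ξ η : X, ‖j' ξ - j' η‖ ≤ L * ‖ξ - η‖)
    (hConv : ∀ ξ η : X, γ * ‖ξ - η‖ ^ 2 ≤ (j' ξ - j' η) (ξ - η))
    (ξbar : X) (hmin : ∀ ξ : X, j ξbar ≤ j ξ) :
    ∀ M : Set X, M.Nonempty → ∀ δ : ℝ, 0 < δ →
      ∀ ξδ ∈ M, j ξδ ≤ sInf (j '' M) + δ / 2 →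
        ‖ξbar - ξδ‖ ≤
          Real.sqrt ((L / γ) * sInf ((fun η => ‖ξbar - η‖ ^ 2) '' M) + δ / γ) := by
  intro M hM δ hδ ξδ hξδ hquasi
  have hd0 : ∀ η, j' ξbar η = 0 := deriv_at_min_eq_zero j j' hGateaux ξbar hmin
  have hbdd : BddBelow (j '' M) := ⟨j ξbar, fun y ⟨η, _, hy⟩ => hy ▸ hmin η⟩
  have key : ∀ η ∈ M, γ * ‖ξbar - ξδ‖ ^ 2 ≤ L * ‖ξbar - η‖ ^ 2 + δ := by
    intro η hη
    have h1 := (taylor_bounds j j' L γ hL hGateaux hLip hConv ξbar (ξδ - ξbar)).1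
    have h2 := (taylor_bounds j j' L γ hL hGateaux hLip hConv ξbar (η - ξbar)).2
    rw [add_sub_cancel, hd0, zero_add] at h1 h2
    have hs : sInf (j '' M) ≤ j η := csInf_le hbdd ⟨η, hη, rfl⟩
    rw [norm_sub_rev] at h1 h2
    linarith
  set T := (fun η => ‖ξbar - η‖ ^ 2) '' M with hT
  have hTne : T.Nonempty := hM.image _
  have hkeyInf : γ * ‖ξbar - ξδ‖ ^ 2 - δ ≤ L * sInf T := by
    have hle : (γ * ‖ξbar - ξδ‖ ^ 2 - δ) / L ≤ sInf T := by
      apply le_csInf hTne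
      rintro b ⟨η, hη, rfl⟩
      dsimp only
      rw [div_le_iff₀ hL]
      have := key η hη
      nlinarith
    calc γ * ‖ξbar - ξδ‖ ^ 2 - δ = L * ((γ * ‖ξbar - ξδ‖ ^ 2 - δ) / L) := by
          field_simp
      _ ≤ L * sInf T := mul_le_mul_of_nonneg_left hle hL.le
  have hsq : ‖ξbar - ξδ‖ ^ 2 ≤ (L / γ) * sInf T + δ / γ := by
    rw [div_mul_eq_mul_div, ← add_div, le_div_iff₀ hγ]
    linarith [hkeyInf]
  rw [Real.le_sqrt (norm_nonneg _) ((sq_nonneg _).trans hsq)]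
  exact hsq
end

section
/- Let U and V be real Hilbert spaces, V̂ ⊆ V a closed subspace, and U_h ⊆ U a finite-dimensional subspace. Let a : V̂ × V̂ → ℝ and b : U × V → ℝ be continuous bilinear forms, with ‖a‖ denoting the norm of a as a bilinear form on V̂ × V̂, and let K̂ := {v ∈ V̂ : b(w_h, v) = 0 for all w_h ∈ U_h}. Assume there is α_h > 0 with sup_{v₂ ∈ K̂, v₂ ≠ 0} a(v₁, v₂)/‖v₂‖_V ≥ α_h ‖v₁‖_V for all v₁ ∈ K̂, and there is β_h > 0 with sup_{v ∈ V̂, v ≠ 0} b(w_h, v)/‖v‖_V ≥ β_h ‖w_h‖_U for all w_h ∈ U_h. Then any solution (r, u_h) ∈ V̂ × U_h of the mixed system with datum f (a continuous linear functional on V̂) satisfies the a priori bound ‖u_h‖_U ≤ (1/β_h)(1 + ‖a‖/α_h) ‖f‖_{V̂*}. -/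
open Topology Filter

noncomputable section

variable {U V : Type*}
  [NormedAddCommGroup U] [InnerProductSpace ℝ U] [CompleteSpace U]
  [NormedAddCommGroup V] [InnerProductSpace ℝ V] [CompleteSpace V]
  (Vhat : Submodule ℝ V)

/-- Shortcut instance (definitionally `inferInstance`), helping Lean synthesize the
operator norm on bilinear forms `Vhat →L[ℝ] Vhat →L[ℝ] ℝ`. -/
instance : SeminormedAddCommGroup (Vhat →L[ℝ] ℝ) := inferInstance

/-- Shortcut instance (definitionally `inferInstance`). -/
instance : NormedSpace ℝ (Vhat →L[ℝ] ℝ) := inferInstance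

/-- A priori bound for solutions of the mixed system: under the
inf-sup conditions for `a` (on the kernel `K̂`) and `b`, any solution `(r, u_h)`
of the mixed system with datum `f` satisfies
`‖u_h‖_U ≤ (1/β_h)(1 + ‖a‖/α_h)‖f‖`, where `‖a‖` is the norm of `a` as a
(continuous) bilinear form on `V̂ × V̂`. -/
theorem mixed_system_apriori_bound
    (hVc : IsClosed (Vhat : Set V))
    (Uh : Submodule ℝ U) (hUfd : FiniteDimensional ℝ Uh)
    (a : Vhat →L[ℝ] Vhat →L[ℝ] ℝ) (b : U →L[ℝ] V →L[ℝ] ℝ)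
    (αh βh : ℝ) (hαh : 0 < αh) (hβh : 0 < βh)
    (hinfsup_a : ∀ v₁ : Vhat, (∀ wh ∈ Uh, b wh (v₁ : V) = 0) →
      αh * ‖v₁‖ ≤
        ⨆ v₂ : {v : Vhat // (∀ wh ∈ Uh, b wh (v : V) = 0) ∧ v ≠ 0},
          a v₁ v₂.1 / ‖v₂.1‖)
    (hinfsup_b : ∀ wh ∈ Uh,
      βh * ‖wh‖ ≤ ⨆ v : {v : Vhat // v ≠ 0}, b wh ((v.1 : V)) / ‖v.1‖) :
    ∀ (f : Vhat →L[ℝ] ℝ) (r : Vhat) (uh : Uh),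
      (∀ v : Vhat, a r v + b (uh : U) (v : V) = f v) →
      (∀ wh ∈ Uh, b wh ((r : V)) = 0) →
      ‖(uh : U)‖ ≤ (1 / βh) * (1 + ‖a‖ / αh) * ‖f‖ := by
  intro f r uh hsol hker
  have hr : ‖r‖ ≤ ‖f‖ / αh := by
    rw [le_div_iff₀ hαh]
    calc ‖r‖ * αh = αh * ‖r‖ := mul_comm _ _
      _ ≤ ⨆ v₂ : {v : Vhat // (∀ wh ∈ Uh, b wh (v : V) = 0) ∧ v ≠ 0},
            a r v₂.1 / ‖v₂.1‖ := hinfsup_a r hker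
      _ ≤ ‖f‖ := by
          apply Real.iSup_le _ (norm_nonneg f)
          rintro ⟨v, hv, hv0⟩
          have hvn : 0 < ‖v‖ := norm_pos_iff.mpr hv0
          rw [div_le_iff₀ hvn]
          have hav : a r v = f v := by
            have h1 := hsol v
            have hb : b (uh : U) (v : V) = 0 := hv _ uh.2
            linarith
          rw [hav]
          calc f v ≤ ‖f v‖ := le_abs_self _
            _ ≤ ‖f‖ * ‖v‖ := f.le_opNorm v
  rw [show (1 / βh) * (1 + ‖a‖ / αh) * ‖f‖ = ((1 + ‖a‖ / αh) * ‖f‖) / βh by ring,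
    le_div_iff₀ hβh]
  calc ‖(uh : U)‖ * βh = βh * ‖(uh : U)‖ := mul_comm _ _
    _ ≤ ⨆ v : {v : Vhat // v ≠ 0}, b (uh : U) ((v.1 : V)) / ‖v.1‖ :=
        hinfsup_b (uh : U) uh.2
    _ ≤ ‖f‖ + ‖a‖ * (‖f‖ / αh) := by
        apply Real.iSup_le _ (by positivity)
        rintro ⟨v, hv0⟩
        have hvn : 0 < ‖v‖ := norm_pos_iff.mpr hv0
        rw [div_le_iff₀ hvn]
        have hb : b (uh : U) (v : V) = f v - a r v := by
          have h1 := hsol v; linarith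
        have h2 : f v ≤ ‖f‖ * ‖v‖ := (le_abs_self _).trans (f.le_opNorm v)
        have h3 : -(a r v) ≤ ‖a‖ * ‖r‖ * ‖v‖ :=
          (neg_le_abs _).trans (a.le_opNorm₂ r v)
        have hna : 0 ≤ ‖a‖ := norm_nonneg a
        nlinarith [mul_le_mul_of_nonneg_right hr hvn.le,
          mul_le_mul_of_nonneg_left (mul_le_mul_of_nonneg_right hr hvn.le) hna]
    _ = (1 + ‖a‖ / αh) * ‖f‖ := by ring

end
end

section
/- Let U and V be real Hilbert spaces, V̂ ⊆ V a closed subspace, and U_h ⊆ U a finite-dimensional subspace. Let b : U × V → ℝ be a continuous bilinear form satisfying the discrete inf-sup condition: there is β_h > 0 with sup_{v ∈ V̂, v ≠ 0} b(w_h, v)/‖v‖_V ≥ β_h ‖w_h‖_U for all w_h ∈ U_h. Let a : V̂ × V̂ → ℝ be a symmetric continuous bilinear form which is an equivalent inner product on V̂, i.e. C₁‖v‖_V ≤ √(a(v,v)) ≤ C₂‖v‖_V for all v ∈ V̂, with constants C₁, C₂ > 0. Then any solution (r, u_h) ∈ V̂ × U_h of the mixed system with datum f (a continuous linear functional on V̂)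 satisfies the improved a priori bound ‖u_h‖_U ≤ (C₂/C₁)(1/β_h)‖f‖_{V̂*}. -/
/-!
Project a test vector `v` onto the `a`-orthogonal complement of `r`:
`v' = v - (a(r, v) / a(r, r)) • r`. Since `b(u_h, r) = 0` and `a(r, v') = 0`, the first equation
gives `b(u_h, v) = b(u_h, v') = f(v')`, while `a(v', v') ≤ a(v, v)` and the norm equivalence give
`‖v'‖ ≤ (C₂ / C₁) ‖v‖`. So `b(u_h, ·)` has norm at most `(C₂ / C₁) ‖f‖` on `V̂`, and the inf-sup
condition turns this into the bound on `‖u_h‖`.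
-/

namespace LinearMap.BilinForm

section Algebraic

variable {E : Type*} [AddCommGroup E] [Module ℝ E] (a : LinearMap.BilinForm ℝ E)

noncomputable def orthogonalizeAgainst (r v : E) : E := v - (a r v / a r r) • r

variable {a}

theorem apply_orthogonalizeAgainst {r : E} (hr : a r r = 0 → r = 0) (v : E) :
    a r (a.orthogonalizeAgainst r v) = 0 := by
  by_cases h : a r r = 0
  · simp [hr h]
  · simp [orthogonalizeAgainst, div_mul_cancel₀ _ h]

/-- With Lean's `x / 0 = 0` this identity needs no hypothesis on `a r r`. -/
theorem orthogonalizeAgainst_apply_self (hsymm : ∀ v w : E, a v w = a w v) (r v : E) :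
    a (a.orthogonalizeAgainst r v) (a.orthogonalizeAgainst r v) = a v v - a r v ^ 2 / a r r := by
  simp only [orthogonalizeAgainst, map_sub, map_smul, LinearMap.sub_apply, LinearMap.smul_apply,
    smul_eq_mul, hsymm v r]
  by_cases h : a r r = 0
  · simp [h]
  · field_simp
    ring

theorem orthogonalizeAgainst_apply_self_le (hsymm : ∀ v w : E, a v w = a w v) {r : E}
    (hr : 0 ≤ a r r) (v : E) :
    a (a.orthogonalizeAgainst r v) (a.orthogonalizeAgainst r v) ≤ a v v := by
  rw [orthogonalizeAgainst_apply_self hsymm]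
  exact sub_le_self _ (div_nonneg (sq_nonneg _) hr)

end Algebraic

section Normed

variable {E : Type*} [NormedAddCommGroup E] [NormedSpace ℝ E] {a : LinearMap.BilinForm ℝ E} {C₁ : ℝ}

theorem eq_zero_of_apply_self_nonpos (hC₁ : 0 < C₁) (hlow : ∀ v : E, C₁ * ‖v‖ ≤ √(a v v)) {v : E}
    (hv : a v v ≤ 0) : v = 0 := by
  have h := hlow v
  rw [Real.sqrt_eq_zero_of_nonpos hv] at h
  exact norm_le_zero_iff.mp (nonpos_of_mul_nonpos_right h hC₁)

theorem apply_self_nonneg_of_le_sqrt (hC₁ : 0 < C₁) (hlow : ∀ v : E, C₁ * ‖v‖ ≤ √(a v v)) (v : E) :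
    0 ≤ a v v := by
  by_contra! hv
  have := eq_zero_of_apply_self_nonpos hC₁ hlow hv.le
  simp [this] at hv

theorem norm_orthogonalizeAgainst_le {C₂ : ℝ} (hsymm : ∀ v w : E, a v w = a w v) (hC₁ : 0 < C₁)
    (hequiv : ∀ v : E, C₁ * ‖v‖ ≤ √(a v v) ∧ √(a v v) ≤ C₂ * ‖v‖) (r v : E) :
    ‖a.orthogonalizeAgainst r v‖ ≤ C₂ / C₁ * ‖v‖ := by
  have hlow v := (hequiv v).1
  have hproj := orthogonalizeAgainst_apply_self_le hsymm
    (apply_self_nonneg_of_le_sqrt hC₁ hlow r) v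
  rw [div_mul_eq_mul_div, le_div_iff₀' hC₁]
  calc C₁ * ‖a.orthogonalizeAgainst r v‖
      ≤ √(a (a.orthogonalizeAgainst r v) (a.orthogonalizeAgainst r v)) := hlow _
    _ ≤ √(a v v) := Real.sqrt_le_sqrt hproj
    _ ≤ C₂ * ‖v‖ := (hequiv v).2

theorem apply_le_of_add_eq {C₂ : ℝ} (hsymm : ∀ v w : E, a v w = a w v) (hC₁ : 0 < C₁)
    (hequiv : ∀ v : E, C₁ * ‖v‖ ≤ √(a v v) ∧ √(a v v) ≤ C₂ * ‖v‖)
    (g : E →ₗ[ℝ] ℝ) (f : StrongDual ℝ E) {r : E} (hsol : ∀ v, a r v + g v = f v) (hgr : g r = 0)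
    (v : E) : g v ≤ C₂ / C₁ * ‖f‖ * ‖v‖ := by
  set v' := a.orthogonalizeAgainst r v
  have hr : a r r = 0 → r = 0 := fun h =>
    eq_zero_of_apply_self_nonpos hC₁ (fun v => (hequiv v).1) h.le
  have hgv : g v = f v' := by
    rw [← hsol v', apply_orthogonalizeAgainst hr, zero_add]
    simp [v', orthogonalizeAgainst, hgr]
  calc g v = f v' := hgv
    _ ≤ ‖f‖ * ‖v'‖ := (le_abs_self _).trans (f.le_opNorm v')
    _ ≤ ‖f‖ * (C₂ / C₁ * ‖v‖) :=
      mul_le_mul_of_nonneg_left (norm_orthogonalizeAgainst_le hsymm hC₁ hequiv r v) (norm_nonneg f)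
    _ = C₂ / C₁ * ‖f‖ * ‖v‖ := by ring

end Normed

end LinearMap.BilinForm

theorem iSup_div_norm_le {E : Type*} [NormedAddCommGroup E] (g : E → ℝ) {M : ℝ} (hM : 0 ≤ M)
    (hg : ∀ v, g v ≤ M * ‖v‖) : ⨆ v : {v : E // v ≠ 0}, g v / ‖v.1‖ ≤ M :=
  Real.iSup_le (fun v => (div_le_iff₀ (norm_pos_iff.mpr v.2)).mpr (hg v)) hM

theorem mixed_system_improved_apriori_bound_general
    {U V : Type*}
    [NormedAddCommGroup U] [InnerProductSpace ℝ U]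
    [NormedAddCommGroup V] [InnerProductSpace ℝ V]
    (Vhat : Submodule ℝ V)
    (Uh : Submodule ℝ U)
    (a : Vhat →L[ℝ] Vhat →L[ℝ] ℝ) (b : U →L[ℝ] V →L[ℝ] ℝ)
    (hsymm : ∀ v₁ v₂ : Vhat, a v₁ v₂ = a v₂ v₁)
    (C₁ C₂ : ℝ) (hC₁ : 0 < C₁) (hC₂ : 0 < C₂)
    (hequiv : ∀ v : Vhat,
      C₁ * ‖v‖ ≤ Real.sqrt (a v v) ∧ Real.sqrt (a v v) ≤ C₂ * ‖v‖)
    (βh : ℝ) (hβh : 0 < βh)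
    (hinfsup_b : ∀ wh ∈ Uh,
      βh * ‖wh‖ ≤ ⨆ v : {v : Vhat // v ≠ 0}, b wh ((v.1 : V)) / ‖v.1‖) :
    ∀ (f : Vhat →L[ℝ] ℝ) (r : Vhat) (uh : Uh),
      (∀ v : Vhat, a r v + b (uh : U) (v : V) = f v) →
      (∀ wh ∈ Uh, b wh ((r : V)) = 0) →
      ‖(uh : U)‖ ≤ (C₂ / C₁) * (1 / βh) * ‖f‖ := by
  intro f r uh hsol horth
  have hbound : ∀ v : Vhat, b uh v ≤ C₂ / C₁ * ‖f‖ * ‖v‖ :=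
    LinearMap.BilinForm.apply_le_of_add_eq (a := a.toLinearMap₁₂) hsymm hC₁ hequiv
      ((b uh).toLinearMap ∘ₗ Vhat.subtype) f hsol (horth uh uh.2)
  have hsup := iSup_div_norm_le (fun v : Vhat => b uh v)
    (mul_nonneg (div_pos hC₂ hC₁).le (norm_nonneg f)) hbound
  have hβ := (hinfsup_b uh uh.2).trans hsup
  rw [mul_comm βh, ← le_div_iff₀ hβh] at hβ
  calc ‖(uh : U)‖ ≤ C₂ / C₁ * ‖f‖ / βh := hβ
    _ = C₂ / C₁ * (1 / βh) * ‖f‖ := by ring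

/-- Improved a priori bound: if `a` is a symmetric continuous
bilinear form which is an equivalent inner product on `V̂` (with constants
`C₁, C₂ > 0`) and `b` satisfies the discrete inf-sup condition with constant
`β_h > 0`, then any solution `(r, u_h)` of the mixed system with datum `f`
satisfies `‖u_h‖_U ≤ (C₂/C₁)(1/β_h)‖f‖`. -/
theorem mixed_system_improved_apriori_bound
    {U V : Type*}
    [NormedAddCommGroup U] [InnerProductSpace ℝ U] [CompleteSpace U]
    [NormedAddCommGroup V] [InnerProductSpace ℝ V] [CompleteSpace V]
    (Vhat : Submodule ℝ V) (hVc : IsClosed (Vhat : Set V))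
    (Uh : Submodule ℝ U) (hUfd : FiniteDimensional ℝ Uh)
    (a : Vhat →L[ℝ] Vhat →L[ℝ] ℝ) (b : U →L[ℝ] V →L[ℝ] ℝ)
    (hsymm : ∀ v₁ v₂ : Vhat, a v₁ v₂ = a v₂ v₁)
    (C₁ C₂ : ℝ) (hC₁ : 0 < C₁) (hC₂ : 0 < C₂)
    (hequiv : ∀ v : Vhat,
      C₁ * ‖v‖ ≤ Real.sqrt (a v v) ∧ Real.sqrt (a v v) ≤ C₂ * ‖v‖)
    (βh : ℝ) (hβh : 0 < βh)
    (hinfsup_b : ∀ wh ∈ Uh,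
      βh * ‖wh‖ ≤ ⨆ v : {v : Vhat // v ≠ 0}, b wh ((v.1 : V)) / ‖v.1‖) :
    ∀ (f : Vhat →L[ℝ] ℝ) (r : Vhat) (uh : Uh),
      (∀ v : Vhat, a r v + b (uh : U) (v : V) = f v) →
      (∀ wh ∈ Uh, b wh ((r : V)) = 0) →
      ‖(uh : U)‖ ≤ (C₂ / C₁) * (1 / βh) * ‖f‖ :=
  mixed_system_improved_apriori_bound_general Vhat Uh a b hsymm C₁ C₂ hC₁ hC₂ hequiv βh hβh
    hinfsup_b
end

section
/- Let V̂ be a real Hilbert space with continuous dual V̂*, let U_h be a finite-dimensional real normed space, let A : V̂ → V̂* and B : U_h → V̂* be continuous linear operators, and let f ∈ V̂*. Define the adjoint A* : V̂ → V̂* by ⟨A*v, w⟩ = ⟨Aw, v⟩ for all v, w ∈ V̂, and define the test space V_h := {v ∈ V̂ : there exists w_h ∈ U_h with A*v = B w_h}. If (r, u_h) ∈ V̂ × U_h satisfies A r + B u_h = f in V̂* and ⟨B w_h, r⟩ = 0 for all w_h ∈ U_h, then u_h solves the Petrov–Galerkin problem: ⟨B u_h, v_h⟩ = ⟨f, v_h⟩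 for all v_h ∈ V_h. -/
open Topology Filter

/-- If `(r, u_h)` solves the mixed system `A r + B u_h = f`,
`⟨B w_h, r⟩ = 0` for all `w_h`, then `u_h` solves the Petrov–Galerkin problem
`⟨B u_h, v_h⟩ = ⟨f, v_h⟩` for all `v_h` in the test space
`V_h = {v : A*v = B w_h for some w_h}`, where `A* = A.flip` is the adjoint. -/
theorem mixed_implies_petrovGalerkin
    {Vhat : Type*} [NormedAddCommGroup Vhat] [InnerProductSpace ℝ Vhat]
    [CompleteSpace Vhat]
    {Uh : Type*} [NormedAddCommGroup Uh] [NormedSpace ℝ Uh] [FiniteDimensional ℝ Uh]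
    (A : Vhat →L[ℝ] (Vhat →L[ℝ] ℝ)) (B : Uh →L[ℝ] (Vhat →L[ℝ] ℝ))
    (f : Vhat →L[ℝ] ℝ) (r : Vhat) (uh : Uh)
    (hsys1 : A r + B uh = f)
    (hsys2 : ∀ wh : Uh, B wh r = 0) :
    ∀ vh : Vhat, (∃ wh : Uh, A.flip vh = B wh) → B uh vh = f vh := by
  rintro vh ⟨wh, hwh⟩
  have h1 : A r vh = 0 := by
    have : A r vh = A.flip vh r := rfl
    rw [this, hwh, hsys2]
  have := congrArg (fun g => g vh) hsys1
  simpa [h1] using this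
end

section
/- Let V̂ be a real Hilbert space with continuous dual V̂*, let U_h be a finite-dimensional real normed space, let A : V̂ → V̂* and B : U_h → V̂* be continuous linear operators, and let f ∈ V̂*. Assume A is bijective from V̂ onto V̂* with continuous inverse, and assume its adjoint A* : V̂ → V̂* (defined by ⟨A*v, w⟩ = ⟨Aw, v⟩) is also bijective onto V̂*. Define V_h := {v ∈ V̂ : there exists w_h ∈ U_h with A*v = B w_h}. If u_h ∈ U_h satisfies ⟨f − B u_h, v_h⟩ = 0 for all v_h ∈ V_h, then there exists r ∈ V̂ such that A r + B u_h = f in V̂* and ⟨B w_h, r⟩ = 0 for all w_h ∈ U_h; i.e. (r, u_h) solves the mixed system. -/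
open Topology Filter

/-- Converse of the Petrov–Galerkin equivalence: if `A` is
bijective with continuous inverse and its adjoint `A* = A.flip` is bijective, and
`u_h` solves the Petrov–Galerkin problem `⟨f − B u_h, v_h⟩ = 0` on
`V_h = {v : A*v = B w_h for some w_h}`, then there exists `r` such that
`(r, u_h)` solves the mixed system. -/
theorem petrovGalerkin_implies_mixed
    {Vhat : Type*} [NormedAddCommGroup Vhat] [InnerProductSpace ℝ Vhat]
    [CompleteSpace Vhat]
    {Uh : Type*} [NormedAddCommGroup Uh] [NormedSpace ℝ Uh] [FiniteDimensional ℝ Uh]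
    (A : Vhat →L[ℝ] (Vhat →L[ℝ] ℝ)) (B : Uh →L[ℝ] (Vhat →L[ℝ] ℝ))
    (f : Vhat →L[ℝ] ℝ)
    (Ainv : (Vhat →L[ℝ] ℝ) →L[ℝ] Vhat)
    (hAinv_left : ∀ v : Vhat, Ainv (A v) = v)
    (hAinv_right : ∀ g : Vhat →L[ℝ] ℝ, A (Ainv g) = g)
    (hAstar_bij : Function.Bijective (⇑A.flip))
    (uh : Uh)
    (hPG : ∀ vh : Vhat, (∃ wh : Uh, A.flip vh = B wh) → f vh - B uh vh = 0) :
    ∃ r : Vhat, A r + B uh = f ∧ ∀ wh : Uh, B wh r = 0 := by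
  refine ⟨Ainv (f - B uh), ?_, ?_⟩
  · have := hAinv_right (f - B uh)
    rw [this]; abel
  · intro wh
    obtain ⟨vh, hvh⟩ := hAstar_bij.surjective (B wh)
    have h1 : B wh (Ainv (f - B uh)) = A (Ainv (f - B uh)) vh := by
      rw [← hvh]; rfl
    rw [h1, hAinv_right]
    have := hPG vh ⟨wh, hvh⟩
    simpa using this
end

section
/- Let U and V be real Hilbert spaces, let U_h ⊆ U and V_h ⊆ V be finite-dimensional subspaces, and let b : U × V → ℝ be a continuous bilinear form satisfying the discrete inf-sup condition: there is β_h > 0 such that sup_{v_h ∈ V_h, v_h ≠ 0} b(w_h, v_h)/‖v_h‖_V ≥ β_h ‖w_h‖_U for all w_h ∈ U_h. Let (·,·)_ξ be an inner product on V whose induced norm ‖v‖_ξ := √((v,v)_ξ) satisfies C₁‖v‖_V ≤ ‖v‖_ξ ≤ C₂‖v‖_V for all v ∈ V, with constants 0 < C₁ ≤ C₂. Then for every linear functional f on V_h there exists a unique pair (r_h, u_h) ∈ V_h × U_h such that (r_h, v_h)_ξ + b(u_h, v_h) = f(v_h) for all v_h ∈ V_h and b(w_h, r_h) = 0 for all w_h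 ∈ U_h; moreover ‖u_h‖_U ≤ (C₂/C₁)(1/β_h) sup_{v_h ∈ V_h, v_h ≠ 0} f(v_h)/‖v_h‖_V. -/
open Topology Filter

set_option maxHeartbeats 2000000 in
/-- Weighted discrete-dual minimal-residual mixed system: with a
discrete inf-sup condition for `b` on `U_h × V_h` and an equivalent inner product
`(·,·)_ξ` on `V` (with norm-equivalence constants `C₁ ≤ C₂`), for every linear
functional `f` on `V_h` there exists a unique pair `(r_h, u_h) ∈ V_h × U_h`
solving the discrete mixed system, and it satisfies
`‖u_h‖_U ≤ (C₂/C₁)(1/β_h) sup_{0 ≠ v_h ∈ V_h} f(v_h)/‖v_h‖_V`. -/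
theorem weighted_discrete_mixed_system
    {U V : Type*}
    [NormedAddCommGroup U] [InnerProductSpace ℝ U] [CompleteSpace U]
    [NormedAddCommGroup V] [InnerProductSpace ℝ V] [CompleteSpace V]
    (Uh : Submodule ℝ U) (hUfd : FiniteDimensional ℝ Uh)
    (Vh : Submodule ℝ V) (hVfd : FiniteDimensional ℝ Vh)
    (b : U →L[ℝ] V →L[ℝ] ℝ)
    (βh : ℝ) (hβh : 0 < βh)
    (hinfsup_b : ∀ wh : Uh,
      βh * ‖(wh : U)‖ ≤ ⨆ vh : {v : Vh // v ≠ 0}, b (wh : U) ((vh.1 : V)) / ‖(vh.1 : V)‖)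
    (aξ : V → V → ℝ)
    (hsymm : ∀ u v : V, aξ u v = aξ v u)
    (hadd : ∀ u u' v : V, aξ (u + u') v = aξ u v + aξ u' v)
    (hsmul : ∀ (c : ℝ) (u v : V), aξ (c • u) v = c * aξ u v)
    (C₁ C₂ : ℝ) (hC₁ : 0 < C₁) (hC₁₂ : C₁ ≤ C₂)
    (hequiv : ∀ v : V,
      C₁ * ‖v‖ ≤ Real.sqrt (aξ v v) ∧ Real.sqrt (aξ v v) ≤ C₂ * ‖v‖) :
    ∀ f : Vh →ₗ[ℝ] ℝ,
      ∃ p : Vh × Uh,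
        ((∀ vh : Vh, aξ (p.1 : V) (vh : V) + b (p.2 : U) (vh : V) = f vh) ∧
          (∀ wh : Uh, b (wh : U) ((p.1 : V)) = 0)) ∧
        (∀ q : Vh × Uh,
          ((∀ vh : Vh, aξ (q.1 : V) (vh : V) + b (q.2 : U) (vh : V) = f vh) ∧
            (∀ wh : Uh, b (wh : U) ((q.1 : V)) = 0)) → q = p) ∧
        ‖(p.2 : U)‖ ≤
          (C₂ / C₁) * (1 / βh) * ⨆ vh : {v : Vh // v ≠ 0}, f vh.1 / ‖(vh.1 : V)‖ := by
  intro f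
  haveI := hUfd
  haveI := hVfd
  classical
  -- basic facts about aξ
  have haξ0 : ∀ v : V, aξ 0 v = 0 := by
    intro v
    have h := hsmul 0 0 v
    simpa using h
  have hnn : ∀ v : V, 0 ≤ aξ v v := by
    intro v
    by_contra h
    push_neg at h
    have h1 := (hequiv v).1
    rw [Real.sqrt_eq_zero'.mpr h.le] at h1
    have hv : v = 0 := by
      have hn : ‖v‖ ≤ 0 := by nlinarith [norm_nonneg v]
      simpa using le_antisymm hn (norm_nonneg v)
    rw [hv, haξ0] at h
    linarith
  have hlow : ∀ v : V, (C₁ * ‖v‖) ^ 2 ≤ aξ v v := by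
    intro v
    have h1 := (hequiv v).1
    nlinarith [Real.sq_sqrt (hnn v), Real.sqrt_nonneg (aξ v v), norm_nonneg v,
      mul_nonneg hC₁.le (norm_nonneg v)]
  have hzero_of : ∀ v : V, aξ v v ≤ 0 → v = 0 := by
    intro v hv
    have h := hlow v
    have hn : ‖v‖ = 0 := by
      by_contra hne
      have hpos : 0 < ‖v‖ := lt_of_le_of_ne (norm_nonneg v) (Ne.symm hne)
      nlinarith [mul_pos hC₁ hpos]
    simpa using hn
  -- bilinear form as a linear map
  let Aξ : V →ₗ[ℝ] V →ₗ[ℝ] ℝ :=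
    LinearMap.mk₂ ℝ aξ hadd (fun c m n => by rw [hsmul]; simp)
      (fun m n₁ n₂ => by rw [hsymm, hadd, hsymm n₁ m, hsymm n₂ m])
      (fun c m n => by rw [hsymm, hsmul, hsymm n m]; simp)
  have hAξ : ∀ x y : V, Aξ x y = aξ x y := fun _ _ => rfl
  have hsub : ∀ x y z : V, aξ (x - y) z = aξ x z - aξ y z := by
    intro x y z
    have h1 : x - y = x + (-1 : ℝ) • y := by
      simp [sub_eq_add_neg]
    rw [h1, hadd, hsmul]
    ring
  have hsub₂ : ∀ x y z : V, aξ x (y - z) = aξ x y - aξ x z := by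
    intro x y z
    rw [hsymm, hsub, hsymm y x, hsymm z x]
  have hsmul₂ : ∀ (c : ℝ) (x y : V), aξ x (c • y) = c * aξ x y := by
    intro c x y
    rw [hsymm, hsmul, hsymm]
  -- b as a bilinear linear map
  let b' : U →ₗ[ℝ] V →ₗ[ℝ] ℝ := (ContinuousLinearMap.coeLM ℝ).comp b.toLinearMap
  -- restricted maps
  let A : Vh →ₗ[ℝ] Vh →ₗ[ℝ] ℝ := (Aξ.comp Vh.subtype).compl₂ Vh.subtype
  let Bb : Uh →ₗ[ℝ] Vh →ₗ[ℝ] ℝ := (b'.comp Uh.subtype).compl₂ Vh.subtype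
  -- inf-sup smallness
  have hz : ∀ u : Uh, (∀ v : Vh, b (u : U) (v : V) = 0) → u = 0 := by
    intro u hu
    have h1 := hinfsup_b u
    have h2 : (⨆ vh : {v : Vh // v ≠ 0}, b (u : U) ((vh.1 : V)) / ‖(vh.1 : V)‖) ≤ 0 :=
      Real.iSup_le (fun vh => by rw [hu vh.1]; simp) le_rfl
    have h3 : ‖(u : U)‖ ≤ 0 := by nlinarith
    have h4 : (u : U) = 0 := by simpa using le_antisymm h3 (norm_nonneg _)
    exact Subtype.ext h4
  -- uniqueness core
  have huniq : ∀ (r : Vh) (u : Uh),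
      (∀ v : Vh, aξ (r : V) (v : V) + b (u : U) (v : V) = 0) →
      (∀ w : Uh, b (w : U) (r : V) = 0) → r = 0 ∧ u = 0 := by
    intro r u h1 h2
    have hr0 : r = 0 := by
      have e := h1 r
      rw [h2 u] at e
      have : aξ (r : V) (r : V) ≤ 0 := by linarith
      exact Subtype.ext (hzero_of _ this)
    refine ⟨hr0, ?_⟩
    apply hz
    intro v
    have e := h1 v
    rw [hr0] at e
    simpa [haξ0] using e
  -- the square linear system
  let T : (Vh × Uh) →ₗ[ℝ] (Module.Dual ℝ Vh × Module.Dual ℝ Uh) :=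
    ((A.comp (LinearMap.fst ℝ Vh Uh)) + (Bb.comp (LinearMap.snd ℝ Vh Uh))).prod
      (Bb.flip.comp (LinearMap.fst ℝ Vh Uh))
  have hTapp1 : ∀ (m : Vh × Uh) (v : Vh),
      (T m).1 v = aξ (m.1 : V) (v : V) + b (m.2 : U) (v : V) := by
    intro m v
    rfl
  have hTapp2 : ∀ (m : Vh × Uh) (w : Uh), (T m).2 w = b (w : U) (m.1 : V) := by
    intro m w
    rfl
  have hTinj : Function.Injective T := by
    rw [← LinearMap.ker_eq_bot, LinearMap.ker_eq_bot']
    intro m hm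
    have h1 : ∀ v : Vh, aξ (m.1 : V) (v : V) + b (m.2 : U) (v : V) = 0 := by
      intro v
      have h := congrArg (fun g => g.1 v) hm
      simpa [hTapp1] using h
    have h2 : ∀ w : Uh, b (w : U) (m.1 : V) = 0 := by
      intro w
      have h := congrArg (fun g => g.2 w) hm
      simpa [hTapp2] using h
    obtain ⟨hr, hu⟩ := huniq m.1 m.2 h1 h2
    exact Prod.ext hr hu
  have hTsurj : Function.Surjective T := by
    have hdim : Module.finrank ℝ (Vh × Uh) =
        Module.finrank ℝ (Module.Dual ℝ Vh × Module.Dual ℝ Uh) := by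
      simp [Module.finrank_prod, Subspace.dual_finrank_eq]
    exact (LinearMap.injective_iff_surjective_of_finrank_eq_finrank hdim).mp hTinj
  obtain ⟨p, hp⟩ := hTsurj (f, 0)
  have heq1 : ∀ v : Vh, aξ (p.1 : V) (v : V) + b (p.2 : U) (v : V) = f v := by
    intro v
    have h := congrArg (fun g => g.1 v) hp
    simpa [hTapp1] using h
  have heq2 : ∀ w : Uh, b (w : U) (p.1 : V) = 0 := by
    intro w
    have h := congrArg (fun g => g.2 w) hp
    simpa [hTapp2] using h
  refine ⟨p, ⟨heq1, heq2⟩, ?_, ?_⟩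
  · rintro q ⟨hq1, hq2⟩
    have h1 : ∀ v : Vh, aξ ((q.1 - p.1 : Vh) : V) (v : V)
        + b ((q.2 - p.2 : Uh) : U) (v : V) = 0 := by
      intro v
      have e1 := hq1 v
      have e2 := heq1 v
      have hc1 : ((q.1 - p.1 : Vh) : V) = (q.1 : V) - (p.1 : V) := rfl
      have hc2 : ((q.2 - p.2 : Uh) : U) = (q.2 : U) - (p.2 : U) := rfl
      rw [hc1, hc2, hsub]
      simp only [map_sub, ContinuousLinearMap.sub_apply, ContinuousLinearMap.coe_sub']
      linarith [e1, e2]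
    have h2 : ∀ w : Uh, b (w : U) ((q.1 - p.1 : Vh) : V) = 0 := by
      intro w
      have hc1 : ((q.1 - p.1 : Vh) : V) = (q.1 : V) - (p.1 : V) := rfl
      rw [hc1, map_sub, hq2 w, heq2 w, sub_zero]
    obtain ⟨hr, hu⟩ := huniq _ _ h1 h2
    exact Prod.ext (sub_eq_zero.mp (by exact_mod_cast hr)) (sub_eq_zero.mp (by exact_mod_cast hu))
  · by_cases hne : Nonempty {v : Vh // v ≠ 0}
    · haveI := hne
      set M := ⨆ vh : {v : Vh // v ≠ 0}, f vh.1 / ‖(vh.1 : V)‖ with hMdef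
      obtain ⟨K, hK⟩ : ∃ K : ℝ, ∀ v : Vh, f v ≤ K * ‖(v : V)‖ := by
        refine ⟨‖LinearMap.toContinuousLinearMap f‖, fun v => ?_⟩
        have h := (LinearMap.toContinuousLinearMap f).le_opNorm v
        simp only [LinearMap.coe_toContinuousLinearMap', Submodule.coe_norm] at h
        calc f v ≤ |f v| := le_abs_self _
          _ ≤ ‖LinearMap.toContinuousLinearMap f‖ * ‖(v : V)‖ := by
              rw [← Real.norm_eq_abs]
              exact h
      have hbdd : BddAbove (Set.range fun vh : {v : Vh // v ≠ 0} => f vh.1 / ‖(vh.1 : V)‖) := by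
        refine ⟨K, ?_⟩
        rintro x ⟨vh, rfl⟩
        have h2 : (0 : ℝ) < ‖(vh.1 : V)‖ :=
          norm_pos_iff.mpr (by simpa [Submodule.coe_eq_zero] using vh.2)
        rw [div_le_iff₀ h2]
        exact hK vh.1
      have hM0 : 0 ≤ M := by
        obtain ⟨v₀⟩ := hne
        have h1 := le_ciSup hbdd v₀
        have h2 := le_ciSup hbdd (⟨-v₀.1, neg_ne_zero.mpr v₀.2⟩ : {v : Vh // v ≠ 0})
        simp only [map_neg, Submodule.coe_neg, norm_neg, neg_div] at h2
        linarith
      have hfle : ∀ v : Vh, f v ≤ M * ‖(v : V)‖ := by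
        intro v
        by_cases hv : v = 0
        · rw [hv]; simp
        · have h1 := le_ciSup hbdd (⟨v, hv⟩ : {v : Vh // v ≠ 0})
          have h2 : (0 : ℝ) < ‖(v : V)‖ :=
            norm_pos_iff.mpr (by simpa [Submodule.coe_eq_zero] using hv)
          rw [div_le_iff₀ h2] at h1
          linarith
      have hfr : aξ (p.1 : V) (p.1 : V) = f p.1 := by
        have e := heq1 p.1
        rw [heq2 p.2] at e
        linarith
      have key : ∀ v : Vh, v ≠ 0 → b (p.2 : U) (v : V) ≤ (C₂ / C₁) * M * ‖(v : V)‖ := by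
        intro v hv
        by_cases hs0 : aξ (p.1 : V) (p.1 : V) = 0
        · have hr0 : (p.1 : V) = 0 := hzero_of _ (le_of_eq hs0)
          have e := heq1 v
          rw [hr0, haξ0] at e
          have hb0 : b (p.2 : U) (v : V) = f v := by linarith
          rw [hb0]
          have h1 : (1 : ℝ) ≤ C₂ / C₁ := (one_le_div hC₁).mpr hC₁₂
          nlinarith [hfle v, mul_nonneg hM0 (norm_nonneg (v : V))]
        · have hspos : 0 < aξ (p.1 : V) (p.1 : V) := lt_of_le_of_ne (hnn _) (Ne.symm hs0)
          set s := aξ (p.1 : V) (p.1 : V) with hs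
          set t := aξ (p.1 : V) (v : V) / s with ht
          set v' : Vh := v - t • p.1 with hv'
          have hcoe : ((v' : Vh) : V) = (v : V) - t • (p.1 : V) := rfl
          have hts : t * s = aξ (p.1 : V) (v : V) := div_mul_cancel₀ _ hs0
          have hexp : aξ ((v' : Vh) : V) ((v' : Vh) : V) = aξ (v : V) (v : V) - t ^ 2 * s := by
            rw [hcoe]
            simp only [hsub, hsub₂, hsmul, hsmul₂]
            rw [hsymm (v : V) (p.1 : V), ← hts, ← hs]
            ring
          have hv'le : aξ ((v' : Vh) : V) ((v' : Vh) : V) ≤ aξ (v : V) (v : V) := by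
            rw [hexp]
            nlinarith [sq_nonneg t, hspos.le]
          have hbv : b (p.2 : U) (v : V) = f v' := by
            have e := heq1 v
            have hfv : f v' = f v - t * f p.1 := by
              rw [hv']
              simp [map_sub, map_smul]
            have haux : aξ (p.1 : V) (v : V) = t * f p.1 := by
              rw [← hfr]; exact hts.symm
            linarith
          have h2 : C₁ * ‖((v' : Vh) : V)‖ ≤ Real.sqrt (aξ ((v' : Vh) : V) ((v' : Vh) : V)) :=
            (hequiv _).1
          have h3 : Real.sqrt (aξ ((v' : Vh) : V) ((v' : Vh) : V))
              ≤ Real.sqrt (aξ (v : V) (v : V)) := Real.sqrt_le_sqrt hv'le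
          have h4 : Real.sqrt (aξ (v : V) (v : V)) ≤ C₂ * ‖(v : V)‖ := (hequiv _).2
          have h5 : ‖((v' : Vh) : V)‖ ≤ (C₂ / C₁) * ‖(v : V)‖ := by
            rw [div_mul_eq_mul_div, le_div_iff₀ hC₁]
            nlinarith
          rw [hbv]
          calc f v' ≤ M * ‖((v' : Vh) : V)‖ := hfle v'
            _ ≤ M * ((C₂ / C₁) * ‖(v : V)‖) := by nlinarith
            _ = (C₂ / C₁) * M * ‖(v : V)‖ := by ring
      have hsup : (⨆ vh : {v : Vh // v ≠ 0}, b (p.2 : U) ((vh.1 : V)) / ‖(vh.1 : V)‖)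
          ≤ (C₂ / C₁) * M := by
        apply ciSup_le
        intro vh
        have h2 : (0 : ℝ) < ‖(vh.1 : V)‖ :=
          norm_pos_iff.mpr (by simpa [Submodule.coe_eq_zero] using vh.2)
        rw [div_le_iff₀ h2]
        exact key vh.1 vh.2
      have hfin := le_trans (hinfsup_b p.2) hsup
      rw [show (C₂ / C₁) * (1 / βh) * M = ((C₂ / C₁) * M) / βh by ring, le_div_iff₀ hβh]
      nlinarith
    · haveI : IsEmpty {v : Vh // v ≠ 0} := not_nonempty_iff.mp hne
      have hu0 : p.2 = 0 := by
        apply hz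
        intro v
        have hv0 : v = 0 := by
          by_contra hv
          exact hne ⟨⟨v, hv⟩⟩
        rw [hv0]
        simp
      rw [hu0]
      have hsup0 : (⨆ vh : {v : Vh // v ≠ 0}, f vh.1 / ‖(vh.1 : V)‖) = 0 :=
        Real.iSup_of_isEmpty _
      rw [hsup0]
      simp
end

section
/- Let Ω ⊆ ℝ^d be an open bounded set with Lebesgue measure, and let v : ℝ^d → ℝ and ϖ : ℝ^d → ℝ be differentiable functions such that v, |∇v| and |∇(ϖ v)| are square-integrable on Ω. Assume: ϖ(x) ≥ w_min > 0 for all x ∈ Ω; ‖∇ϖ‖_{L^∞(Ω)} ≤ K for some K ≥ 0; and the Poincaré-type inequality ‖v‖_{L²(Ω)} ≤ C_Ω ‖∇v‖_{L²(Ω)} holds with a constant C_Ω > 0. Then ∫_Ω ∇(ϖ v) · ∇v dx ≥ (w_min − C_Ω K) ‖∇v‖²_{L²(Ω)}. In particular, if C_Ω K < w_min, the weighted Galerkin bilinear form b(ϖ v, v) := ∫_Ω ∇(ϖ v)·∇v is coercive in ‖∇v‖_{L²(Ω)}. -/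
/-!
Expanding `∇(ϖ v) = ϖ ∇v + v ∇ϖ`, the integrand `∇(ϖ v) · ∇v` is a.e. on `Ω` at least
`w_min ‖∇v‖² - K |v| ‖∇v‖`. Cauchy–Schwarz followed by the Poincaré inequality bounds
`∫_Ω |v| ‖∇v‖` by `C_Ω ‖∇v‖²_{L²(Ω)}`.
-/

open Topology Filter MeasureTheory

section Gradient
variable {E : Type*} [NormedAddCommGroup E] [InnerProductSpace ℝ E] [CompleteSpace E]

theorem gradient_fun_mul {f g : E → ℝ} {x : E} (hf : DifferentiableAt ℝ f x)
    (hg : DifferentiableAt ℝ g x) :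
    gradient (fun y => f y * g y) x = f x • gradient g x + g x • gradient f x := by
  simp only [gradient, fderiv_fun_mul hf hg, map_add, map_smul]

theorem measurable_gradient [MeasurableSpace E] [BorelSpace E] (f : E → ℝ) :
    Measurable (gradient f) :=
  (InnerProductSpace.toDual ℝ E).symm.continuous.measurable.comp (measurable_fderiv ℝ f)

end Gradient

theorem le_inner_smul_add_smul {E : Type*} [NormedAddCommGroup E] [InnerProductSpace ℝ E]
    {a b c K : ℝ} {u h : E} (hca : c ≤ a) (hh : ‖h‖ ≤ K) :
    c * ‖u‖ ^ 2 - K * (‖b‖ * ‖u‖) ≤ inner ℝ (a • u + b • h) u := by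
  rw [inner_add_left, real_inner_smul_left, real_inner_smul_left, real_inner_self_eq_norm_sq]
  have hcross : |b * inner ℝ h u| ≤ K * (‖b‖ * ‖u‖) := by
    rw [abs_mul, ← Real.norm_eq_abs]
    calc ‖b‖ * |inner ℝ h u| ≤ ‖b‖ * (K * ‖u‖) := by
          gcongr
          exact (abs_real_inner_le_norm h u).trans (by gcongr)
      _ = K * (‖b‖ * ‖u‖) := by ring
  nlinarith [neg_abs_le (b * inner ℝ h u), sq_nonneg ‖u‖]

section L2
variable {α : Type*} [MeasurableSpace α] {μ : Measure α}

theorem MeasureTheory.MemLp.integrable_inner {𝕜 E : Type*} [RCLike 𝕜] [NormedAddCommGroup E]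
    [InnerProductSpace 𝕜 E] {F G : α → E} (hF : MemLp F 2 μ) (hG : MemLp G 2 μ) :
    Integrable (fun x => inner 𝕜 (F x) (G x)) μ :=
  (L2.integrable_inner (hF.toLp F) (hG.toLp G)).congr <| by
    filter_upwards [hF.coeFn_toLp, hG.coeFn_toLp] with x hFx hGx
    rw [hFx, hGx]

theorem integral_norm_mul_norm_le_sqrt_mul_sqrt {E F : Type*} [NormedAddCommGroup E]
    [NormedAddCommGroup F] {f : α → E} {g : α → F} (hf : MemLp f 2 μ) (hg : MemLp g 2 μ) :
    ∫ x, ‖f x‖ * ‖g x‖ ∂μ ≤ √(∫ x, ‖f x‖ ^ 2 ∂μ) * √(∫ x, ‖g x‖ ^ 2 ∂μ) := by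
  have := integral_mul_norm_le_Lp_mul_Lq Real.HolderConjugate.two_two
    (ENNReal.ofReal_ofNat 2 ▸ hf.norm) (ENNReal.ofReal_ofNat 2 ▸ hg.norm)
  simpa only [norm_norm, Real.sqrt_eq_rpow, ← one_div, Real.rpow_ofNat] using this

theorem integral_norm_mul_norm_le_of_sqrt_le {E F : Type*} [NormedAddCommGroup E]
    [NormedAddCommGroup F] {f : α → E} {g : α → F} {C : ℝ} (hf : MemLp f 2 μ) (hg : MemLp g 2 μ)
    (hfg : √(∫ x, ‖f x‖ ^ 2 ∂μ) ≤ C * √(∫ x, ‖g x‖ ^ 2 ∂μ)) :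
    ∫ x, ‖f x‖ * ‖g x‖ ∂μ ≤ C * ∫ x, ‖g x‖ ^ 2 ∂μ :=
  calc ∫ x, ‖f x‖ * ‖g x‖ ∂μ ≤ √(∫ x, ‖f x‖ ^ 2 ∂μ) * √(∫ x, ‖g x‖ ^ 2 ∂μ) :=
        integral_norm_mul_norm_le_sqrt_mul_sqrt hf hg
    _ ≤ C * √(∫ x, ‖g x‖ ^ 2 ∂μ) * √(∫ x, ‖g x‖ ^ 2 ∂μ) := by gcongr
    _ = C * ∫ x, ‖g x‖ ^ 2 ∂μ := by
        rw [mul_assoc, Real.mul_self_sqrt (integral_nonneg fun x => by positivity)]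

end L2

theorem weighted_galerkin_laplacian_coercivity_general
    {d : ℕ} (Ω : Set (EuclideanSpace ℝ (Fin d)))
    (hΩopen : IsOpen Ω)
    (v ϖ : EuclideanSpace ℝ (Fin d) → ℝ)
    (hv : Differentiable ℝ v) (hϖ : Differentiable ℝ ϖ)
    (hv_L2 : Integrable (fun x => (v x) ^ 2) (volume.restrict Ω))
    (hgradv_L2 : Integrable (fun x => ‖gradient v x‖ ^ 2) (volume.restrict Ω))
    (hgradϖv_L2 : Integrable (fun x => ‖gradient (fun y => ϖ y * v y) x‖ ^ 2)
      (volume.restrict Ω))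
    (wmin K CΩ : ℝ) (hK : 0 ≤ K)
    (hϖ_lower : ∀ x ∈ Ω, wmin ≤ ϖ x)
    (hgradϖ_bdd : ∀ᵐ x ∂(volume.restrict Ω), ‖gradient ϖ x‖ ≤ K)
    (hPoincare : Real.sqrt (∫ x in Ω, (v x) ^ 2) ≤
      CΩ * Real.sqrt (∫ x in Ω, ‖gradient v x‖ ^ 2)) :
    (wmin - CΩ * K) * ∫ x in Ω, ‖gradient v x‖ ^ 2 ≤
      ∫ x in Ω, (inner ℝ (gradient (fun y => ϖ y * v y) x) (gradient v x) : ℝ) := by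
  set G := ∫ x in Ω, ‖gradient v x‖ ^ 2
  have hv_mem : MemLp v 2 (volume.restrict Ω) :=
    (memLp_two_iff_integrable_sq hv.continuous.aestronglyMeasurable).2 hv_L2
  have hgradv_mem : MemLp (gradient v) 2 (volume.restrict Ω) :=
    (memLp_two_iff_integrable_sq_norm (measurable_gradient v).aestronglyMeasurable).2 hgradv_L2
  have hgradϖv_mem : MemLp (gradient fun y => ϖ y * v y) 2 (volume.restrict Ω) :=
    (memLp_two_iff_integrable_sq_norm (measurable_gradient _).aestronglyMeasurable).2 hgradϖv_L2
  have hcross_int : Integrable (fun x => ‖v x‖ * ‖gradient v x‖) (volume.restrict Ω) :=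
    hv_mem.norm.integrable_mul hgradv_mem.norm
  have hcross_le : ∫ x in Ω, ‖v x‖ * ‖gradient v x‖ ≤ CΩ * G :=
    integral_norm_mul_norm_le_of_sqrt_le hv_mem hgradv_mem
      (by simpa only [Real.norm_eq_abs, sq_abs] using hPoincare)
  have hpointwise : ∀ᵐ x ∂(volume.restrict Ω),
      wmin * ‖gradient v x‖ ^ 2 - K * (‖v x‖ * ‖gradient v x‖) ≤
        inner ℝ (gradient (fun y => ϖ y * v y) x) (gradient v x) := by
    filter_upwards [hgradϖ_bdd, ae_restrict_mem hΩopen.measurableSet] with x hKx hxΩ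
    rw [gradient_fun_mul (hϖ x) (hv x)]
    exact le_inner_smul_add_smul (hϖ_lower x hxΩ) hKx
  calc (wmin - CΩ * K) * G = wmin * G - K * (CΩ * G) := by ring
    _ ≤ wmin * G - K * ∫ x in Ω, ‖v x‖ * ‖gradient v x‖ := by gcongr
    _ = ∫ x in Ω, (wmin * ‖gradient v x‖ ^ 2 - K * (‖v x‖ * ‖gradient v x‖)) := by
        rw [integral_sub (hgradv_L2.const_mul wmin) (hcross_int.const_mul K),
          integral_const_mul, integral_const_mul]
    _ ≤ _ := integral_mono_ae ((hgradv_L2.const_mul wmin).sub (hcross_int.const_mul K))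
        (hgradϖv_mem.integrable_inner hgradv_mem) hpointwise

/-- Weighted Galerkin coercivity estimate for the Laplacian: if
`ϖ ≥ w_min > 0` on `Ω`, `‖∇ϖ‖_{L^∞(Ω)} ≤ K`, and the Poincaré inequality
`‖v‖_{L²(Ω)} ≤ C_Ω ‖∇v‖_{L²(Ω)}` holds, then
`∫_Ω ∇(ϖ v) · ∇v ≥ (w_min − C_Ω K) ‖∇v‖²_{L²(Ω)}`. -/
theorem weighted_galerkin_laplacian_coercivity
    {d : ℕ} (Ω : Set (EuclideanSpace ℝ (Fin d)))
    (hΩopen : IsOpen Ω) (hΩbdd : Bornology.IsBounded Ω)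
    (v ϖ : EuclideanSpace ℝ (Fin d) → ℝ)
    (hv : Differentiable ℝ v) (hϖ : Differentiable ℝ ϖ)
    (hv_L2 : Integrable (fun x => (v x) ^ 2) (volume.restrict Ω))
    (hgradv_L2 : Integrable (fun x => ‖gradient v x‖ ^ 2) (volume.restrict Ω))
    (hgradϖv_L2 : Integrable (fun x => ‖gradient (fun y => ϖ y * v y) x‖ ^ 2)
      (volume.restrict Ω))
    (wmin K CΩ : ℝ) (hwmin : 0 < wmin) (hK : 0 ≤ K) (hCΩ : 0 < CΩ)
    (hϖ_lower : ∀ x ∈ Ω, wmin ≤ ϖ x)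
    (hgradϖ_bdd : ∀ᵐ x ∂(volume.restrict Ω), ‖gradient ϖ x‖ ≤ K)
    (hPoincare : Real.sqrt (∫ x in Ω, (v x) ^ 2) ≤
      CΩ * Real.sqrt (∫ x in Ω, ‖gradient v x‖ ^ 2)) :
    (wmin - CΩ * K) * ∫ x in Ω, ‖gradient v x‖ ^ 2 ≤
      ∫ x in Ω, (inner ℝ (gradient (fun y => ϖ y * v y) x) (gradient v x) : ℝ) :=
  weighted_galerkin_laplacian_coercivity_general Ω hΩopen v ϖ hv hϖ hv_L2 hgradv_L2 hgradϖv_L2 wmin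
    K CΩ hK hϖ_lower hgradϖ_bdd hPoincare
end
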